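/- arXiv:2501.00612 — 4 statements merged into one kernel-verified Lean document; each statement's English description precedes it below -/
import Mathlib

section
/- For all p_s, p_q with 0 < p_s ≤ p_q < 1, the semantic communication limit satisfies Λ(p_s, 1 - p_q) ≤ H₂(p_s): when the receiver knows nothing (p_r = 1), the optimal semantic communication cost is at most the classical cost H₂(p_s) of losslessly transmitting the sender's full knowledge. -/
/-- The logical semantic entropy `Λ(a,b) = a·log₂((a+b)/a) + b·log₂((a+b)/b)`. -/
noncomputable def lse (a b : ℝ) : ℝ :=
  a * Real.logb 2 ((a + b) / a) + b * Real.logb 2 ((a + b) / b)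

/-- The binary entropy function `H₂(p) = -p·log₂ p - (1-p)·log₂(1-p)`. -/
noncomputable def binEnt (p : ℝ) : ℝ :=
  -p * Real.logb 2 p - (1 - p) * Real.logb 2 (1 - p)

/-! With `φ x = x log x` one has `Λ(a, b) = (φ (a + b) - φ a - φ b) / log 2` and `H₂(p) = Λ(p, 1 - p)`.
Since `φ` is convex, its increments `x ↦ φ (x + a) - φ x` are monotone, so `Λ(a, ·)` is monotone
and `Λ(p_s, 1 - p_q) ≤ Λ(p_s, 1 - p_s) = H₂(p_s)`. -/

open Real

theorem ConvexOn.map_add_sub_map_le {s : Set ℝ} {f : ℝ → ℝ} (hf : ConvexOn ℝ s f)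
    {a b c : ℝ} (ha : 0 ≤ a) (hb : b ∈ s) (hc : c + a ∈ s) (hbc : b ≤ c) :
    f (b + a) - f b ≤ f (c + a) - f c := by
  rcases ha.eq_or_lt with rfl | ha
  · simp
  have hs : s.OrdConnected := hf.1.ordConnected
  have hba : b + a ∈ s := hs.out hb hc ⟨by linarith, by linarith⟩
  have hc' : c ∈ s := hs.out hb hc ⟨hbc, by linarith⟩
  have h₁ := hf.secant_mono hb hba hc (by linarith) (by linarith) (by linarith)
  have h₂ := hf.secant_mono hc hb hc' (by linarith) (by linarith) hbc
  have key : (f (b + a) - f b) / a ≤ (f (c + a) - f c) / a := calc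
    (f (b + a) - f b) / a = (f (b + a) - f b) / (b + a - b) := by ring_nf
    _ ≤ (f (c + a) - f b) / (c + a - b) := h₁
    _ = (f b - f (c + a)) / (b - (c + a)) := by rw [← neg_div_neg_eq]; ring_nf
    _ ≤ (f c - f (c + a)) / (c - (c + a)) := h₂
    _ = (f (c + a) - f c) / a := by rw [← neg_div_neg_eq]; ring_nf
  exact (div_le_div_iff_of_pos_right ha).1 key

theorem lse_eq_mul_log (a b : ℝ) (ha : 0 < a) (hb : 0 < b) :
    lse a b = ((a + b) * log (a + b) - a * log a - b * log b) / log 2 := by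
  rw [lse, logb, logb, log_div (by positivity) ha.ne', log_div (by positivity) hb.ne']
  ring

theorem lse_one_sub_eq_binEnt (p : ℝ) : lse p (1 - p) = binEnt p := by
  simp only [lse, binEnt, add_sub_cancel, one_div, logb_inv]
  ring

theorem lse_le_lse_of_le {a b c : ℝ} (ha : 0 < a) (hb : 0 < b) (hbc : b ≤ c) :
    lse a b ≤ lse a c := by
  have hinc := convexOn_mul_log.map_add_sub_map_le ha.le (Set.mem_Ici.2 hb.le)
    (Set.mem_Ici.2 (by linarith : 0 ≤ c + a)) hbc
  rw [lse_eq_mul_log a b ha hb, lse_eq_mul_log a c ha (hb.trans_le hbc), add_comm a b,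
    add_comm a c]
  exact div_le_div_of_nonneg_right (by linarith) (log_nonneg one_le_two)

/-- for `0 < p_s ≤ p_q < 1`, `Λ(p_s, 1 - p_q) ≤ H₂(p_s)`. -/
theorem lse_le_binEnt_sender (ps pq : ℝ) (hs : 0 < ps) (hsq : ps ≤ pq) (hq : pq < 1) :
    lse ps (1 - pq) ≤ binEnt ps :=
  calc lse ps (1 - pq) ≤ lse ps (1 - ps) := lse_le_lse_of_le hs (by linarith) (by linarith)
    _ = binEnt ps := lse_one_sub_eq_binEnt ps
end

section
/- For all p_s, p_q with 0 < p_s ≤ p_q < 1, the semantic communication limit satisfies Λ(p_s, 1 - p_q) ≤ H₂(p_q): when the receiver knows nothing (p_r = 1), the optimal semantic communication cost is at most the classical cost H₂(p_q) of losslessly transmitting the query itself. -/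
/-! `H₂(p) = Λ(p, 1 - p)`, and `Λ(a, b)` is monotone in `a`: its second summand trivially, its
first because `(1 + b/a₂)^(a₂/a₁) ≥ 1 + b/a₁` for `a₁ ≤ a₂` by Bernoulli's inequality. -/

open Real

theorem binEnt_eq_lse (p : ℝ) : binEnt p = lse p (1 - p) := by
  simp only [binEnt, lse, add_sub_cancel, one_div, logb_inv]
  ring

theorem mul_log_add_div_self_le {a₁ a₂ b : ℝ} (ha₁ : 0 < a₁) (h : a₁ ≤ a₂) (hb : 0 < b) :
    a₁ * log ((a₁ + b) / a₁) ≤ a₂ * log ((a₂ + b) / a₂) := by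
  have ha₂ : 0 < a₂ := ha₁.trans_le h
  have bernoulli : 1 + b / a₁ ≤ (1 + b / a₂) ^ (a₂ / a₁) := by
    have := one_add_mul_self_le_rpow_one_add (s := b / a₂) (by linarith [div_pos hb ha₂])
      ((one_le_div ha₁).mpr h)
    rwa [mul_comm, div_mul_div_cancel₀ ha₂.ne'] at this
  have hlog : log (1 + b / a₁) ≤ a₂ / a₁ * log (1 + b / a₂) := by
    rw [← log_rpow (by positivity)]
    exact log_le_log (by positivity) bernoulli
  rw [add_div, add_div, div_self ha₁.ne', div_self ha₂.ne']
  calc a₁ * log (1 + b / a₁) ≤ a₁ * (a₂ / a₁ * log (1 + b / a₂)) := by gcongr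
    _ = a₂ * log (1 + b / a₂) := by field_simp

theorem lse_le_lse_left {a₁ a₂ b : ℝ} (ha₁ : 0 < a₁) (h : a₁ ≤ a₂) (hb : 0 < b) :
    lse a₁ b ≤ lse a₂ b := by
  have first : a₁ * logb 2 ((a₁ + b) / a₁) ≤ a₂ * logb 2 ((a₂ + b) / a₂) := by
    simp only [logb, ← mul_div_assoc]
    exact div_le_div_of_nonneg_right (mul_log_add_div_self_le ha₁ h hb) (log_nonneg one_le_two)
  have second : b * logb 2 ((a₁ + b) / b) ≤ b * logb 2 ((a₂ + b) / b) := by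
    gcongr
    norm_num
  exact add_le_add first second

/-- for `0 < p_s ≤ p_q < 1`, `Λ(p_s, 1 - p_q) ≤ H₂(p_q)`. -/
theorem lse_le_binEnt_query (ps pq : ℝ) (hs : 0 < ps) (hsq : ps ≤ pq) (hq : pq < 1) :
    lse ps (1 - pq) ≤ binEnt pq := by
  rw [binEnt_eq_lse]
  exact lse_le_lse_left hs hsq (sub_pos.mpr hq)
end

section
/- For all p_s, p_q, p_r with 0 < p_s ≤ p_q < p_r ≤ 1, helping the receiver prove a targeted query is never more expensive than conveying the sender's full knowledge: Λ(p_s, p_r - p_q) ≤ Λ(p_s, p_r - p_s), with strict inequality whenever p_s < p_q. -/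
/-!
With `η x = -x log x`, one has `Λ(a, b) · log 2 = η a + η b - η (a + b)`, whose derivative in `b`
is `log (a + b) - log b > 0`. So `Λ(a, ·)` is strictly increasing on `(0, ∞)`, and a query with
`p_s ≤ p_q` leaves the smaller second argument `p_r - p_q ≤ p_r - p_s`.
-/

open Real Set

lemma lse_eq_negMulLog {a b : ℝ} (ha : 0 < a) (hb : 0 < b) :
    lse a b = (negMulLog a + negMulLog b - negMulLog (a + b)) / log 2 := by
  have hab : 0 < a + b := by positivity
  simp only [lse, logb, negMulLog, log_div hab.ne' ha.ne', log_div hab.ne' hb.ne']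
  ring

lemma strictMonoOn_lse {a : ℝ} (ha : 0 < a) : StrictMonoOn (lse a) (Ioi 0) := by
  refine StrictMonoOn.congr ?_ (fun b hb => (lse_eq_negMulLog ha hb).symm)
  refine strictMonoOn_of_hasDerivWithinAt_pos (convex_Ioi 0)
    (f' := fun b => (log (a + b) - log b) / log 2) (by fun_prop) (fun b hb => ?_) (fun b hb => ?_)
  all_goals
    rw [interior_Ioi, mem_Ioi] at hb
    have hab : b < a + b := by linarith
  · have hderiv := (((hasDerivAt_negMulLog hb.ne').fun_sub
      ((hasDerivAt_negMulLog (hb.trans hab).ne').comp_const_add a b)).const_add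
      (negMulLog a)).div_const (log 2)
    simp only [← add_sub_assoc] at hderiv
    exact (hderiv.congr_deriv (by ring)).hasDerivWithinAt
  · exact div_pos (sub_pos.2 (log_lt_log hb hab)) (log_pos one_lt_two)

theorem lse_query_le_full_general (ps pq pr : ℝ) (hs : 0 < ps) (hsq : ps ≤ pq)
    (hqr : pq < pr) :
    lse ps (pr - pq) ≤ lse ps (pr - ps) ∧ (ps < pq → lse ps (pr - pq) < lse ps (pr - ps)) := by
  have hquery : pr - pq ∈ Ioi 0 := sub_pos.2 hqr
  have hfull : pr - ps ∈ Ioi 0 := sub_pos.2 (hsq.trans_lt hqr)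
  exact ⟨(strictMonoOn_lse hs).monotoneOn hquery hfull (by linarith),
    fun h => strictMonoOn_lse hs hquery hfull (by linarith)⟩

/-- for `0 < p_s ≤ p_q < p_r ≤ 1`, a targeted query is never more expensive
than conveying the sender's full knowledge, strictly cheaper when `p_s < p_q`. -/
theorem lse_query_le_full (ps pq pr : ℝ) (hs : 0 < ps) (hsq : ps ≤ pq)
    (hqr : pq < pr) (hr : pr ≤ 1) :
    lse ps (pr - pq) ≤ lse ps (pr - ps) ∧ (ps < pq → lse ps (pr - pq) < lse ps (pr - ps)) :=
  lse_query_le_full_general ps pq pr hs hsq hqr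
end

section
/- Soundness and completeness of entailment with respect to kernels: for all propositional formulas s and t over m variables, t is derivable from s in the Hilbert-style proof system (s ⊢ t) if and only if the kernel of s is a subset of the kernel of t, i.e., every valuation that makes s true also makes t true. -/
/-- Propositional formulas over `m` variables `X₁, …, X_m`. -/
inductive PropForm (m : ℕ) : Type
  | var : Fin m → PropForm m
  | not : PropForm m → PropForm m
  | and : PropForm m → PropForm m → PropForm m
  | or  : PropForm m → PropForm m → PropForm m
  | imp : PropForm m → PropForm m → PropForm m

namespace PropForm

/-- Truth-table evaluation of a formula under a valuation `v : Fin m → Bool`. -/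
def eval {m : ℕ} (v : Fin m → Bool) : PropForm m → Bool
  | var i => v i
  | not s => !(eval v s)
  | and s t => eval v s && eval v t
  | or s t => eval v s || eval v t
  | imp s t => !(eval v s) || eval v t

/-- The kernel `⟦s⟧` of a formula `s`: the set of valuations that satisfy it. -/
def kernel {m : ℕ} (s : PropForm m) : Set (Fin m → Bool) :=
  {v | eval v s = true}

/-- A standard complete set of axiom schemes for classical propositional logic
(Hilbert style), covering implication, negation, conjunction and disjunction. -/
inductive Ax {m : ℕ} : PropForm m → Prop
  | ax1 (s t : PropForm m) : Ax (s.imp (t.imp s))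
  | ax2 (s t u : PropForm m) : Ax ((s.imp (t.imp u)).imp ((s.imp t).imp (s.imp u)))
  | ax3 (s t : PropForm m) : Ax ((s.not.imp t.not).imp (t.imp s))
  | ax4 (s t : PropForm m) : Ax ((s.and t).imp s)
  | ax5 (s t : PropForm m) : Ax ((s.and t).imp t)
  | ax6 (s t : PropForm m) : Ax (s.imp (t.imp (s.and t)))
  | ax7 (s t : PropForm m) : Ax (s.imp (s.or t))
  | ax8 (s t : PropForm m) : Ax (t.imp (s.or t))
  | ax9 (s t u : PropForm m) : Ax ((s.imp u).imp ((t.imp u).imp ((s.or t).imp u)))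

/-- Hilbert-style derivability `h ⊢ t`: `t` is derivable from the hypothesis `h`
using the axiom schemes and modus ponens as the only inference rule. -/
inductive Derives {m : ℕ} (h : PropForm m) : PropForm m → Prop
  | ax {t : PropForm m} : Ax t → Derives h t
  | hyp : Derives h h
  | mp {s t : PropForm m} : Derives h (s.imp t) → Derives h s → Derives h t

end PropForm


/-!
Soundness: every axiom is a tautology and modus ponens preserves truth under a valuation.

Completeness is Kalmár's argument. Write `lit v t` for `t` or `¬t` according to whether `v`
satisfies `t`. From the hypotheses `lit v Xᵢ` every `lit v t` is derivable, by induction on `t`.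
For a tautology `t` this gives a derivation of `t` from the literals of any valuation; the
hypotheses `Xⱼ` and `¬Xⱼ` are then discharged one variable at a time by the deduction theorem
and proof by cases. Applied to `s ⟹ t`, this yields `s ⊢ t` whenever `⟦s⟧ ⊆ ⟦t⟧`.
-/

namespace PropForm

variable {m : ℕ}

theorem eval_imp_eq_true {v : Fin m → Bool} {s t : PropForm m} :
    eval v (s.imp t) = true ↔ (eval v s = true → eval v t = true) := by
  simp only [eval]
  cases eval v s <;> cases eval v t <;> decide

theorem Ax.eval_eq_true (v : Fin m → Bool) {t : PropForm m} (h : Ax t) : eval v t = true := by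
  cases h <;> simp only [eval] <;> grind

theorem Derives.eval_eq_true {s t : PropForm m} (h : Derives s t) {v : Fin m → Bool}
    (hs : eval v s = true) : eval v t = true := by
  induction h with
  | ax hax => exact hax.eval_eq_true v
  | hyp => exact hs
  | mp _ _ ihst ihs => exact eval_imp_eq_true.1 ihst ihs

theorem Derives.kernel_subset {s t : PropForm m} (h : Derives s t) : kernel s ⊆ kernel t :=
  fun _ => h.eval_eq_true

/-- `Derives` allows a single hypothesis; the deduction theorem needs a set of them. -/
inductive Proves (Γ : Set (PropForm m)) : PropForm m → Prop
  | ax {t : PropForm m} : Ax t → Proves Γ t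
  | hyp {t : PropForm m} : t ∈ Γ → Proves Γ t
  | mp {s t : PropForm m} : Proves Γ (s.imp t) → Proves Γ s → Proves Γ t

namespace Proves

variable {Γ Δ : Set (PropForm m)} {a b t : PropForm m}

theorem mono (h : Proves Γ t) (hΓΔ : Γ ⊆ Δ) : Proves Δ t := by
  induction h with
  | ax hax => exact ax hax
  | hyp ht => exact hyp (hΓΔ ht)
  | mp _ _ ihst ihs => exact mp ihst ihs

theorem head : Proves (insert a Γ) a := hyp (Set.mem_insert a Γ)

theorem tail (h : Proves Γ t) : Proves (insert a Γ) t := h.mono (Set.subset_insert a Γ)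

theorem imp_self : Proves Γ (a.imp a) :=
  mp (mp (ax (.ax2 a (a.imp a) a)) (ax (.ax1 _ _))) (ax (.ax1 _ _))

theorem imp_const (h : Proves Γ t) : Proves Γ (a.imp t) := mp (ax (.ax1 t a)) h

theorem imp_intro (h : Proves (insert a Γ) t) : Proves Γ (a.imp t) := by
  induction h with
  | ax hax => exact imp_const (ax hax)
  | hyp ht =>
    rcases Set.mem_insert_iff.1 ht with rfl | ht
    · exact imp_self
    · exact imp_const (hyp ht)
  | mp _ _ ihst ihs => exact mp (mp (ax (.ax2 _ _ _)) ihst) ihs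

theorem imp_of_not (h : Proves Γ a.not) : Proves Γ (a.imp b) :=
  mp (ax (.ax3 b a)) (imp_const h)

theorem absurd (h : Proves Γ a) (hn : Proves Γ a.not) : Proves Γ b := mp (imp_of_not hn) h

theorem by_contra (h : Proves (insert a.not Γ) b) (hn : Proves (insert a.not Γ) b.not) :
    Proves Γ a :=
  mp (mp (ax (.ax3 a (a.imp a))) (imp_intro (absurd h hn))) imp_self

theorem of_not_not (h : Proves Γ a.not.not) : Proves Γ a := by_contra head h.tail

theorem not_intro (h : Proves (insert a Γ) b) (hn : Proves (insert a Γ) b.not) :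
    Proves Γ a.not :=
  have ha : Proves (insert a.not.not Γ) a := of_not_not head
  by_contra (mp h.imp_intro.tail ha) (mp hn.imp_intro.tail ha)

theorem not_not_intro (h : Proves Γ a) : Proves Γ a.not.not := not_intro h.tail head

theorem by_cases (h : Proves (insert a Γ) t) (hn : Proves (insert a.not Γ) t) : Proves Γ t :=
  have hna : Proves (insert t.not Γ) a.not := not_intro (mp h.imp_intro.tail.tail head) head.tail
  by_contra (mp hn.imp_intro.tail hna) head

theorem derives {t : PropForm m} (h : Proves ∅ t) (s : PropForm m) : Derives s t := by
  induction h with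
  | ax hax => exact .ax hax
  | hyp ht => exact (Set.notMem_empty _ ht).elim
  | mp _ _ ihst ihs => exact .mp ihst ihs

end Proves

def lit (v : Fin m → Bool) (t : PropForm m) : PropForm m := if eval v t then t else t.not

section Kalmar

open Proves

variable {Γ : Set (PropForm m)} {v : Fin m → Bool} {s u : PropForm m}

theorem proves_lit_not (hs : Proves Γ (lit v s)) : Proves Γ (lit v s.not) := by
  unfold lit at *
  cases h : eval v s <;> simp only [eval, h] at hs ⊢
  · exact hs
  · exact hs.not_not_intro

theorem proves_lit_and (hs : Proves Γ (lit v s)) (hu : Proves Γ (lit v u)) :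
    Proves Γ (lit v (s.and u)) := by
  unfold lit at *
  cases hvs : eval v s <;> cases hvu : eval v u <;> simp only [eval, hvs, hvu] at hs hu ⊢
  · exact not_intro (mp (ax (.ax4 s u)) head) hs.tail
  · exact not_intro (mp (ax (.ax4 s u)) head) hs.tail
  · exact not_intro (mp (ax (.ax5 s u)) head) hu.tail
  · exact mp (mp (ax (.ax6 s u)) hs) hu

theorem proves_lit_or (hs : Proves Γ (lit v s)) (hu : Proves Γ (lit v u)) :
    Proves Γ (lit v (s.or u)) := by
  unfold lit at *
  cases hvs : eval v s <;> cases hvu : eval v u <;> simp only [eval, hvs, hvu] at hs hu ⊢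
  · exact not_intro (mp (mp (mp (ax (.ax9 s u s)) imp_self) (imp_of_not hu)).tail head) hs.tail
  · exact mp (ax (.ax8 s u)) hu
  · exact mp (ax (.ax7 s u)) hs
  · exact mp (ax (.ax7 s u)) hs

theorem proves_lit_imp (hs : Proves Γ (lit v s)) (hu : Proves Γ (lit v u)) :
    Proves Γ (lit v (s.imp u)) := by
  unfold lit at *
  cases hvs : eval v s <;> cases hvu : eval v u <;> simp only [eval, hvs, hvu] at hs hu ⊢
  · exact imp_of_not hs
  · exact imp_of_not hs
  · exact not_intro (mp head hs.tail) hu.tail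
  · exact imp_const hu

theorem proves_lit (hvar : ∀ i, Proves Γ (lit v (var i))) : ∀ t, Proves Γ (lit v t)
  | var i => hvar i
  | not s => proves_lit_not (proves_lit hvar s)
  | and s u => proves_lit_and (proves_lit hvar s) (proves_lit hvar u)
  | or s u => proves_lit_or (proves_lit hvar s) (proves_lit hvar u)
  | imp s u => proves_lit_imp (proves_lit hvar s) (proves_lit hvar u)

end Kalmar

def lits (v : Fin m → Bool) (A : Set (Fin m)) : Set (PropForm m) := (fun i => lit v (var i)) '' A

section Elimination

open Proves Function

variable {v : Fin m → Bool} {A : Set (Fin m)} {t : PropForm m}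

theorem proves_lits_univ (ht : eval v t = true) : Proves (lits v Set.univ) t := by
  have hvar (i : Fin m) : Proves (lits v Set.univ) (lit v (var i)) :=
    hyp ⟨i, Set.mem_univ i, rfl⟩
  simpa [lit, ht] using proves_lit hvar t

theorem lits_update_insert {j : Fin m} (hj : j ∉ A) (b : Bool) :
    lits (update v j b) (insert j A) = insert (lit (update v j b) (var j)) (lits v A) := by
  rw [lits, Set.image_insert_eq]
  congr 1
  refine Set.image_congr fun i hi => ?_
  have hij : i ≠ j := ne_of_mem_of_not_mem hi hj
  rw [lit, lit, eval, eval, update_of_ne hij]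

theorem proves_of_forall_update {j : Fin m} (hj : j ∉ A)
    (h : ∀ b, Proves (lits (update v j b) (insert j A)) t) : Proves (lits v A) t := by
  simp only [lits_update_insert hj, lit, eval, update_self] at h
  exact by_cases (h true) (h false)

theorem proves_of_forall_eval (ht : ∀ v, eval v t = true) : Proves ∅ t := by
  have hdischarged : ∀ S : Finset (Fin m), ∀ v, Proves (lits v (↑S)ᶜ) t := by
    intro S
    induction S using Finset.induction_on with
    | empty => simpa using fun v => proves_lits_univ (ht v)
    | insert j S hj ih =>
      intro v
      refine proves_of_forall_update (j := j) (by simp) fun b => ?_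
      convert ih (update v j b) using 2
      ext i
      by_cases hij : i = j <;> simp [hij, hj]
  simpa [lits] using hdischarged Finset.univ (fun _ => true)

end Elimination

theorem derives_of_kernel_subset {s t : PropForm m} (h : kernel s ⊆ kernel t) : Derives s t :=
  have htaut : ∀ v, eval v (s.imp t) = true := fun _ => eval_imp_eq_true.2 (@h _)
  .mp ((proves_of_forall_eval htaut).derives s) .hyp

end PropForm

/-- soundness and completeness of entailment with respect to kernels:
`s ⊢ t` iff every valuation making `s` true also makes `t` true. -/
theorem derives_iff_kernel_subset {m : ℕ} (s t : PropForm m) :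
    PropForm.Derives s t ↔ PropForm.kernel s ⊆ PropForm.kernel t := by
  exact ⟨PropForm.Derives.kernel_subset, PropForm.derives_of_kernel_subset⟩
end
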